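/- Let μ, ν, ρ be Borel probability measures on ℝ with μ and ν compactly supported, and let c : ℝ³ → ℝ be bounded measurable. Then the dual functional G is concave on bounded triples: for all f, h, f′, h′ ∈ L∞(μ), g, g′ ∈ L∞(ν), the map φ(t) = G(t·f′+(1−t)·f, t·g′+(1−t)·g, t·h′+(1−t)·h) is concave on [0,1]; in fact φ is twice differentiable on (0,1) with φ″(t) = −∫ |f′(x)−f(x)+g′(y)−g(y)+(h′(x)−h(x))(y−x)|² dπ(fᵗ,gᵗ,hᵗ), where (fᵗ,gᵗ,hᵗ) = (t·f′+(1−t)·f, t·g′+(1−t)·g, t·h′+(1−t)·h). -/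

import Mathlib

open MeasureTheory Filter Set

/-- Topological support of a Borel measure on ℝ. -/
noncomputable def msupp (ν : Measure ℝ) : Set ℝ := {x | ∀ U ∈ nhds x, 0 < ν U}

/-- `f` is (essentially) bounded and measurable, i.e. a representative of an `L∞(μ)` class. -/
def MemLinf (μ : Measure ℝ) (f : ℝ → ℝ) : Prop :=
  Measurable f ∧ ∃ C : ℝ, ∀ᵐ x ∂μ, |f x| ≤ C

/-- The dual functional `G(f,g,h) = -Z(f,g,h) - ∫ f dμ - ∫ g dν`. -/
noncomputable def Gfun (μ ν ρ : Measure ℝ) (c : ℝ × ℝ × ℝ → ℝ) (f g h : ℝ → ℝ) : ℝ :=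
  -(∫ q, Real.exp (-c q - f q.1 - g q.2.1 - h q.1 * (q.2.1 - q.1)) ∂(μ.prod (ν.prod ρ)))
    - ∫ x, f x ∂μ - ∫ y, g y ∂ν

/-! Along the segment the exponent of the density of `π` is affine in `t`: it is `B - t * A`
with `B = dualExponent c f g h` and `A = B - dualExponent c f' g' h'`. Both are essentially
bounded, since `c`, the potentials and, on the compact supports of `μ` and `ν`, `y - x` are.
Hence `φ t = -∫ exp (B - t * A) d(μ ⊗ ν ⊗ ρ)` minus an affine function of `t`, and
differentiating twice under the integral sign, dominated thanks to the `L∞` bounds, gives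
`φ'' = -∫ A² exp (B - t * A) ≤ 0`, which also yields concavity. -/

open scoped ENNReal

lemma ae_mem_msupp (ν : Measure ℝ) : ∀ᵐ x ∂ν, x ∈ msupp ν := by
  rw [ae_iff]
  refine measure_null_of_locally_null _ fun x hx => ?_
  simp only [msupp, mem_ofPred_eq, not_forall, not_lt, nonpos_iff_eq_zero] at hx
  obtain ⟨U, hU, hU0⟩ := hx
  exact ⟨U, nhdsWithin_le_nhds hU, hU0⟩

lemma memLp_top_id_of_isCompact_msupp {μ : Measure ℝ} (hμ : IsCompact (msupp μ)) :
    MemLp id ∞ μ := by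
  obtain ⟨R, hR⟩ := hμ.isBounded.subset_closedBall 0
  refine memLp_top_of_bound measurable_id.aestronglyMeasurable R ?_
  filter_upwards [ae_mem_msupp μ] with x hx
  simpa using hR hx

lemma MemLinf.memLp_top {μ : Measure ℝ} {f : ℝ → ℝ} (hf : MemLinf μ f) : MemLp f ∞ μ := by
  obtain ⟨hfm, C, hC⟩ := hf
  exact memLp_top_of_bound hfm.aestronglyMeasurable C
    (by simpa only [Real.norm_eq_abs] using hC)

lemma MemLinf.integrable {μ : Measure ℝ} [IsFiniteMeasure μ] {f : ℝ → ℝ} (hf : MemLinf μ f) :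
    Integrable f μ :=
  hf.memLp_top.integrable le_top

lemma MeasureTheory.MemLp.ae_norm_le_toReal_eLpNorm_top {α E : Type*} [MeasurableSpace α]
    [NormedAddCommGroup E] {μ : Measure α} {f : α → E} (hf : MemLp f ∞ μ) :
    ∀ᵐ x ∂μ, ‖f x‖ ≤ (eLpNorm f ∞ μ).toReal := by
  filter_upwards [ae_le_eLpNormEssSup (f := f) (μ := μ)] with x hx
  rw [← toReal_enorm (f x), eLpNorm_exponent_top]
  exact ENNReal.toReal_mono (by simpa only [eLpNorm_exponent_top] using hf.eLpNorm_lt_top.ne) hx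

lemma integral_mul_add_one_sub_mul {α : Type*} [MeasurableSpace α] {μ : Measure α}
    {f f' : α → ℝ} (hf : Integrable f μ) (hf' : Integrable f' μ) (t : ℝ) :
    ∫ x, t * f' x + (1 - t) * f x ∂μ = t * ∫ x, f' x ∂μ + (1 - t) * ∫ x, f x ∂μ := by
  rw [integral_add (hf'.const_mul t) (hf.const_mul (1 - t)), integral_const_mul,
    integral_const_mul]

lemma hasDerivAt_mul_add_one_sub_mul (a b t : ℝ) :
    HasDerivAt (fun t => t * a + (1 - t) * b) (a - b) t := by
  have := ((hasDerivAt_id' t).mul_const a).add (((hasDerivAt_id' t).const_sub 1).mul_const b)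
  exact this.congr_deriv (by ring)

lemma concaveOn_univ_of_hasDerivAt2_nonpos {f f' f'' : ℝ → ℝ}
    (hf : ∀ x, HasDerivAt f (f' x) x) (hf' : ∀ x, HasDerivAt f' (f'' x) x)
    (hf'' : ∀ x, f'' x ≤ 0) : ConcaveOn ℝ univ f :=
  concaveOn_of_hasDerivWithinAt2_nonpos convex_univ
    (fun x _ => (hf x).continuousAt.continuousWithinAt) (fun x _ => (hf x).hasDerivWithinAt)
    (fun x _ => (hf' x).hasDerivWithinAt) fun x _ => hf'' x

lemma norm_pow_mul_exp_sub_mul_le {a b C D t s : ℝ} (ha : ‖a‖ ≤ C) (hb : ‖b‖ ≤ D) (n : ℕ)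
    (hts : |t| ≤ s) : ‖a ^ n * Real.exp (b - t * a)‖ ≤ C ^ n * Real.exp (D + s * C) := by
  have hexp : b - t * a ≤ D + s * C := by
    have hta : ‖t * a‖ ≤ s * C := by
      rw [norm_mul, Real.norm_eq_abs]
      exact mul_le_mul hts ha (norm_nonneg _) ((abs_nonneg t).trans hts)
    linarith [Real.le_norm_self b, Real.le_norm_self (-(t * a)), norm_neg (t * a)]
  rw [norm_mul, norm_pow, Real.norm_of_nonneg (Real.exp_pos _).le]
  exact mul_le_mul (pow_le_pow_left₀ (norm_nonneg _) ha n) (Real.exp_le_exp.2 hexp)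
    (Real.exp_pos _).le (pow_nonneg ((norm_nonneg _).trans ha) n)

section ExponentialTilt

variable {α : Type*} [MeasurableSpace α] {P : Measure α} {A B : α → ℝ}
  (hA : MemLp A ∞ P) (hB : MemLp B ∞ P)
include hA hB

lemma aestronglyMeasurable_pow_mul_exp_sub_mul (n : ℕ) (t : ℝ) :
    AEStronglyMeasurable (fun q => A q ^ n * Real.exp (B q - t * A q)) P := by
  have := hA.aestronglyMeasurable
  have := hB.aestronglyMeasurable
  fun_prop

variable [IsFiniteMeasure P]

lemma integrable_pow_mul_exp_sub_mul (n : ℕ) (t : ℝ) :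
    Integrable (fun q => A q ^ n * Real.exp (B q - t * A q)) P :=
  .mono' (integrable_const _) (aestronglyMeasurable_pow_mul_exp_sub_mul hA hB n t)
    (by filter_upwards [hA.ae_norm_le_toReal_eLpNorm_top, hB.ae_norm_le_toReal_eLpNorm_top]
          with q hAq hBq using norm_pow_mul_exp_sub_mul_le hAq hBq n le_rfl)

lemma hasDerivAt_integral_pow_mul_exp_sub_mul (n : ℕ) (t : ℝ) :
    HasDerivAt (fun s => ∫ q, A q ^ n * Real.exp (B q - s * A q) ∂P)
      (-∫ q, A q ^ (n + 1) * Real.exp (B q - t * A q) ∂P) t := by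
  have hderiv : ∀ q s, HasDerivAt (fun s => A q ^ n * Real.exp (B q - s * A q))
      (-(A q ^ (n + 1) * Real.exp (B q - s * A q))) s := fun q s => by
    have := ((((hasDerivAt_id' s).mul_const (A q)).const_sub (B q)).exp).const_mul (A q ^ n)
    exact this.congr_deriv (by ring)
  have hbound : ∀ᵐ q ∂P, ∀ s ∈ Metric.ball t 1,
      ‖-(A q ^ (n + 1) * Real.exp (B q - s * A q))‖ ≤
        (eLpNorm A ∞ P).toReal ^ (n + 1) *
          Real.exp ((eLpNorm B ∞ P).toReal + (|t| + 1) * (eLpNorm A ∞ P).toReal) := by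
    filter_upwards [hA.ae_norm_le_toReal_eLpNorm_top, hB.ae_norm_le_toReal_eLpNorm_top]
      with q hAq hBq s hs
    have hs' : |s| ≤ |t| + 1 := by
      rw [Metric.mem_ball, Real.dist_eq] at hs
      linarith [abs_sub_abs_le_abs_sub s t]
    rw [norm_neg]
    exact norm_pow_mul_exp_sub_mul_le hAq hBq (n + 1) hs'
  have := hasDerivAt_integral_of_dominated_loc_of_deriv_le (Metric.ball_mem_nhds t one_pos)
    (Eventually.of_forall fun s => aestronglyMeasurable_pow_mul_exp_sub_mul hA hB n s)
    (integrable_pow_mul_exp_sub_mul hA hB n t)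
    (aestronglyMeasurable_pow_mul_exp_sub_mul hA hB (n + 1) t).neg hbound (integrable_const _)
    (Eventually.of_forall fun q s _ => hderiv q s)
  simpa only [integral_neg] using this.2

end ExponentialTilt

def dualExponent (c : ℝ × ℝ × ℝ → ℝ) (f g h : ℝ → ℝ) (q : ℝ × ℝ × ℝ) : ℝ :=
  -c q - f q.1 - g q.2.1 - h q.1 * (q.2.1 - q.1)

lemma Gfun_eq_dualExponent (μ ν ρ : Measure ℝ) (c : ℝ × ℝ × ℝ → ℝ) (f g h : ℝ → ℝ) :
    Gfun μ ν ρ c f g h = -(∫ q, Real.exp (dualExponent c f g h q) ∂(μ.prod (ν.prod ρ)))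
      - ∫ x, f x ∂μ - ∫ y, g y ∂ν :=
  rfl

lemma dualExponent_sub_dualExponent (c : ℝ × ℝ × ℝ → ℝ) (f g h f' g' h' : ℝ → ℝ)
    (q : ℝ × ℝ × ℝ) : dualExponent c f g h q - dualExponent c f' g' h' q =
      f' q.1 - f q.1 + (g' q.2.1 - g q.2.1) + (h' q.1 - h q.1) * (q.2.1 - q.1) := by
  unfold dualExponent; ring

lemma dualExponent_segment (c : ℝ × ℝ × ℝ → ℝ) (f g h f' g' h' : ℝ → ℝ) (t : ℝ)
    (q : ℝ × ℝ × ℝ) :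
    dualExponent c (fun x => t * f' x + (1 - t) * f x) (fun y => t * g' y + (1 - t) * g y)
      (fun x => t * h' x + (1 - t) * h x) q =
      dualExponent c f g h q - t * (dualExponent c f g h q - dualExponent c f' g' h' q) := by
  unfold dualExponent; ring

lemma Gfun_segment {μ ν ρ : Measure ℝ} {c : ℝ × ℝ × ℝ → ℝ} {f g h f' g' h' : ℝ → ℝ}
    (hf : Integrable f μ) (hf' : Integrable f' μ) (hg : Integrable g ν) (hg' : Integrable g' ν)
    (t : ℝ) :
    Gfun μ ν ρ c (fun x => t * f' x + (1 - t) * f x) (fun y => t * g' y + (1 - t) * g y)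
      (fun x => t * h' x + (1 - t) * h x) =
      -(∫ q, Real.exp (dualExponent c f g h q
          - t * (dualExponent c f g h q - dualExponent c f' g' h' q)) ∂(μ.prod (ν.prod ρ)))
        - (t * (∫ x, f' x ∂μ + ∫ y, g' y ∂ν) + (1 - t) * (∫ x, f x ∂μ + ∫ y, g y ∂ν)) := by
  rw [Gfun_eq_dualExponent, integral_mul_add_one_sub_mul hf hf',
    integral_mul_add_one_sub_mul hg hg']
  simp only [dualExponent_segment]
  ring

lemma memLp_top_dualExponent {μ ν ρ : Measure ℝ} [IsProbabilityMeasure μ]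
    [IsProbabilityMeasure ν] [IsProbabilityMeasure ρ] (hμ : IsCompact (msupp μ))
    (hν : IsCompact (msupp ν)) {c : ℝ × ℝ × ℝ → ℝ} (hc : MemLp c ∞ (μ.prod (ν.prod ρ)))
    {f g h : ℝ → ℝ} (hf : MemLp f ∞ μ) (hg : MemLp g ∞ ν) (hh : MemLp h ∞ μ) :
    MemLp (dualExponent c f g h) ∞ (μ.prod (ν.prod ρ)) := by
  have onX {u : ℝ → ℝ} (hu : MemLp u ∞ μ) :
      MemLp (fun q : ℝ × ℝ × ℝ => u q.1) ∞ (μ.prod (ν.prod ρ)) :=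
    hu.comp_measurePreserving measurePreserving_fst
  have onY {v : ℝ → ℝ} (hv : MemLp v ∞ ν) :
      MemLp (fun q : ℝ × ℝ × ℝ => v q.2.1) ∞ (μ.prod (ν.prod ρ)) :=
    (hv.comp_measurePreserving measurePreserving_fst).comp_measurePreserving measurePreserving_snd
  have hyx := (onY (memLp_top_id_of_isCompact_msupp hν)).sub
    (onX (memLp_top_id_of_isCompact_msupp hμ))
  exact ((hc.neg.sub (onX hf)).sub (onY hg)).sub (hyx.mul' (onX hh))

theorem stmt_11
    (μ ν ρ : Measure ℝ)
    [IsProbabilityMeasure μ] [IsProbabilityMeasure ν] [IsProbabilityMeasure ρ]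
    (hμc : IsCompact (msupp μ)) (hνc : IsCompact (msupp ν))
    (c : ℝ × ℝ × ℝ → ℝ) (Cc : ℝ) (hcm : Measurable c) (hcb : ∀ p, |c p| ≤ Cc)
    (f h f' h' g g' : ℝ → ℝ)
    (hf : MemLinf μ f) (hh : MemLinf μ h) (hf' : MemLinf μ f') (hh' : MemLinf μ h')
    (hg : MemLinf ν g) (hg' : MemLinf ν g')
    (φ : ℝ → ℝ)
    (hφ : ∀ t : ℝ, φ t = Gfun μ ν ρ c
        (fun x => t * f' x + (1 - t) * f x)
        (fun y => t * g' y + (1 - t) * g y)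
        (fun x => t * h' x + (1 - t) * h x)) :
    ConcaveOn ℝ (Set.Icc 0 1) φ ∧
    ∃ φd : ℝ → ℝ,
      (∀ t ∈ Set.Ioo (0 : ℝ) 1, HasDerivAt φ (φd t) t) ∧
      (∀ t ∈ Set.Ioo (0 : ℝ) 1, HasDerivAt φd
        (-(∫ p, (f' p.1 - f p.1 + (g' p.2.1 - g p.2.1)
              + (h' p.1 - h p.1) * (p.2.1 - p.1)) ^ 2
            * Real.exp (-c p - (t * f' p.1 + (1 - t) * f p.1)
              - (t * g' p.2.1 + (1 - t) * g p.2.1)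
              - (t * h' p.1 + (1 - t) * h p.1) * (p.2.1 - p.1))
            ∂(μ.prod (ν.prod ρ)))) t) := by
  have hc : MemLp c ∞ (μ.prod (ν.prod ρ)) :=
    memLp_top_of_bound hcm.aestronglyMeasurable Cc (ae_of_all _ hcb)
  set B := dualExponent c f g h
  set A := fun q => B q - dualExponent c f' g' h' q
  have hB : MemLp B ∞ (μ.prod (ν.prod ρ)) :=
    memLp_top_dualExponent hμc hνc hc hf.memLp_top hg.memLp_top hh.memLp_top
  have hA : MemLp A ∞ (μ.prod (ν.prod ρ)) :=
    hB.sub (memLp_top_dualExponent hμc hνc hc hf'.memLp_top hg'.memLp_top hh'.memLp_top)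
  set Z : ℕ → ℝ → ℝ := fun n t => ∫ q, A q ^ n * Real.exp (B q - t * A q) ∂(μ.prod (ν.prod ρ))
  have hZ (n : ℕ) (t : ℝ) : HasDerivAt (Z n) (-Z (n + 1) t) t :=
    hasDerivAt_integral_pow_mul_exp_sub_mul hA hB n t
  set a := ∫ x, f' x ∂μ + ∫ y, g' y ∂ν
  set b := ∫ x, f x ∂μ + ∫ y, g y ∂ν
  have hφZ : φ = fun t => -Z 0 t - (t * a + (1 - t) * b) := by
    funext t
    rw [hφ t, Gfun_segment hf.integrable hf'.integrable hg.integrable hg'.integrable]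
    simp only [Z, pow_zero, one_mul]
    rfl
  have hφ' (t : ℝ) : HasDerivAt φ (Z 1 t - (a - b)) t := by
    rw [hφZ, ← neg_neg (Z 1 t)]
    exact (hZ 0 t).neg.sub (hasDerivAt_mul_add_one_sub_mul a b t)
  have hφ'' (t : ℝ) : HasDerivAt (fun t => Z 1 t - (a - b)) (-Z 2 t) t := (hZ 1 t).sub_const _
  refine ⟨?_, _, fun t _ => hφ' t, fun t _ => ?_⟩
  · refine (concaveOn_univ_of_hasDerivAt2_nonpos hφ' hφ'' fun t => ?_).subset (subset_univ _)
      (convex_Icc 0 1)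
    exact neg_nonpos.2 (integral_nonneg fun q => mul_nonneg (sq_nonneg _) (Real.exp_pos _).le)
  · convert hφ'' t using 3
    funext q
    rw [← dualExponent_sub_dualExponent]
    exact congrArg (fun e => A q ^ 2 * Real.exp e) (dualExponent_segment c f g h f' g' h' t q)
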